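/- arXiv:1504.06809 — 7 statements merged into one kernel-verified Lean document; each statement's English description precedes it below -/
import Mathlib

section
/- There exists an absolute constant C > 0 such that for every odd prime power q, |K_q − 1| ≤ C/q, where K_q = (1 − q^{−1})^{−1/2} · ∏_Q (1 − q^{−2·deg Q})^{−1/2}, the product running over all monic irreducible polynomials Q ∈ F_q[T] with χ_q(Q(0)) = −1. In particular K_q → 1 as q → ∞ through odd prime powers. -/
/-!
Taking logarithms, `log K_q` is `-½ log (1 - q⁻¹)` plus the sum over the relevant `Q` of
`-½ log (1 - q^(-2 deg Q))`, and `-½ log (1 - x) ≤ x` for `0 ≤ x ≤ ½`. There are at most `q^n`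
monic polynomials of degree `n`, so the sum is at most `∑_{n ≥ 1} q^n q^(-2n) = 1/(q - 1)`.
Hence `0 ≤ log K_q ≤ 3/q`, and `|K_q - 1| ≤ 6/q` follows from `|eˢ - 1| ≤ 2|s|` for `|s| ≤ 1`.
-/

open Polynomial Finset

section MonicCount

variable {R : Type*} [Semiring R] [Fintype R]

theorem card_le_of_forall_monic_natDegree_eq {s : Finset R[X]} {n : ℕ}
    (hs : ∀ P ∈ s, P.Monic ∧ P.natDegree = n) : #s ≤ Fintype.card R ^ n := by
  classical
  have hinj : Set.InjOn (fun (P : R[X]) (i : Fin n) => P.coeff i) s := by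
    intro P hP Q hQ hPQ
    obtain ⟨hPm, hPd⟩ := hs P hP
    obtain ⟨hQm, hQd⟩ := hs Q hQ
    ext k
    rcases lt_trichotomy k n with hk | rfl | hk
    · exact congrFun hPQ ⟨k, hk⟩
    · rw [← hPd, hPm.coeff_natDegree, hPd, ← hQd, hQm.coeff_natDegree]
    · rw [coeff_eq_zero_of_natDegree_lt (hPd ▸ hk), coeff_eq_zero_of_natDegree_lt (hQd ▸ hk)]
  simpa using card_le_card_of_injOn _ (fun _ _ => mem_coe.2 (mem_univ _)) hinj

theorem sum_inv_card_pow_two_mul_natDegree_le [Nontrivial R] {s : Finset R[X]}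
    (hs : ∀ P ∈ s, P.Monic ∧ 0 < P.natDegree) :
    ∑ P ∈ s, ((Fintype.card R : ℝ) ^ (2 * P.natDegree))⁻¹ ≤ ((Fintype.card R : ℝ) - 1)⁻¹ := by
  have hq : 1 < (Fintype.card R : ℝ) := by exact_mod_cast Fintype.one_lt_card
  set q : ℝ := (Fintype.card R : ℝ)
  have hdeg : ∀ P ∈ s, P.natDegree ∈ Ico 1 (s.sup natDegree + 1) := fun P hP =>
    mem_Ico.2 ⟨(hs P hP).2, Nat.lt_succ_of_le (le_sup hP)⟩
  have hfiber (n : ℕ) :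
      ∑ P ∈ s with P.natDegree = n, (q ^ (2 * P.natDegree))⁻¹ ≤ q⁻¹ ^ n := by
    have hcard : (#{P ∈ s | P.natDegree = n} : ℝ) ≤ q ^ n := by
      simp only [q]
      exact_mod_cast card_le_of_forall_monic_natDegree_eq fun P hP =>
        ⟨(hs P (mem_filter.1 hP).1).1, (mem_filter.1 hP).2⟩
    calc ∑ P ∈ s with P.natDegree = n, (q ^ (2 * P.natDegree))⁻¹
        = #{P ∈ s | P.natDegree = n} * (q ^ (2 * n))⁻¹ := by
          rw [sum_congr rfl fun P hP => by rw [(mem_filter.1 hP).2], sum_const, nsmul_eq_mul]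
      _ ≤ q ^ n * (q ^ (2 * n))⁻¹ := by gcongr
      _ = q⁻¹ ^ n := by
          rw [two_mul, pow_add, mul_inv, ← mul_assoc, mul_inv_cancel₀ (by positivity), one_mul,
            inv_pow]
  calc ∑ P ∈ s, (q ^ (2 * P.natDegree))⁻¹
      = ∑ n ∈ Ico 1 (s.sup natDegree + 1),
          ∑ P ∈ s with P.natDegree = n, (q ^ (2 * P.natDegree))⁻¹ :=
        (sum_fiberwise_of_maps_to hdeg _).symm
    _ ≤ ∑ n ∈ Ico 1 (s.sup natDegree + 1), q⁻¹ ^ n := sum_le_sum fun n _ => hfiber n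
    _ ≤ q⁻¹ ^ 1 / (1 - q⁻¹) :=
        geom_sum_Ico_le_of_lt_one (by positivity) (inv_lt_one_of_one_lt₀ hq)
    _ = (q - 1)⁻¹ := by
        have : q - 1 ≠ 0 := by linarith
        field_simp

end MonicCount

theorem log_sqrt_inv_one_sub_mem_Icc {x : ℝ} (h0 : 0 ≤ x) (h1 : x ≤ 1 / 2) :
    Real.log √((1 - x)⁻¹) ∈ Set.Icc 0 x := by
  have hpos : 0 < 1 - x := by linarith
  have hge : 1 ≤ (1 - x)⁻¹ := one_le_inv₀ hpos |>.2 (by linarith)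
  have hle : (1 - x)⁻¹ - 1 ≤ 2 * x := by
    rw [inv_eq_one_div, div_sub_one hpos.ne', div_le_iff₀ hpos]
    nlinarith
  rw [Real.log_sqrt (by positivity)]
  exact ⟨by linarith [Real.log_nonneg hge],
    by linarith [Real.log_le_sub_one_of_pos (lt_of_lt_of_le one_pos hge)]⟩

theorem exists_tprod_sqrt_inv_one_sub_eq_exp {ι : Type*} {x : ι → ℝ} {B : ℝ}
    (hx : ∀ i, 0 ≤ x i ∧ x i ≤ 1 / 2) (hB : ∀ u : Finset ι, ∑ i ∈ u, x i ≤ B) :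
    ∃ T ∈ Set.Icc 0 B, ∏' i, √((1 - x i)⁻¹) = Real.exp T := by
  have hlog (i : ι) := log_sqrt_inv_one_sub_mem_Icc (hx i).1 (hx i).2
  have hlog0 : 0 ≤ fun i => Real.log √((1 - x i)⁻¹) := fun i => (hlog i).1
  have hsum (u : Finset ι) : ∑ i ∈ u, Real.log √((1 - x i)⁻¹) ≤ B :=
    (sum_le_sum fun i _ => (hlog i).2).trans (hB u)
  refine ⟨_, ⟨tsum_nonneg hlog0, Real.tsum_le_of_sum_le hlog0 hsum⟩, ?_⟩
  refine (Real.rexp_tsum_eq_tprod (fun i => ?_) (summable_of_sum_le hlog0 hsum)).symm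
  have : 0 < 1 - x i := by linarith [(hx i).2]
  positivity

theorem abs_sqrt_inv_one_sub_inv_mul_exp_sub_one_le {q T : ℝ} (hq : 3 ≤ q) (hT0 : 0 ≤ T)
    (hT : T ≤ (q - 1)⁻¹) : |√((1 - q⁻¹)⁻¹) * Real.exp T - 1| ≤ 6 / q := by
  have hqinv : q⁻¹ ≤ 1 / 2 := by rw [inv_le_comm₀ (by linarith) (by norm_num)]; linarith
  obtain ⟨hA0, hAle⟩ := log_sqrt_inv_one_sub_mem_Icc (inv_nonneg.2 (by linarith)) hqinv
  have hq1 : (q - 1)⁻¹ ≤ 2 / q := by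
    rw [inv_le_iff_one_le_mul₀ (by linarith)]; field_simp; linarith
  have hs : Real.log √((1 - q⁻¹)⁻¹) + T ≤ 3 / q := by
    rw [show 3 / q = q⁻¹ + 2 / q by ring]; linarith
  have hA : 0 < √((1 - q⁻¹)⁻¹) := by
    have : 0 < 1 - q⁻¹ := by linarith
    positivity
  rw [← Real.exp_log hA, ← Real.exp_add]
  calc |Real.exp (Real.log √((1 - q⁻¹)⁻¹) + T) - 1|
      ≤ 2 * |Real.log √((1 - q⁻¹)⁻¹) + T| := Real.abs_exp_sub_one_le <| by
        rw [abs_of_nonneg (by linarith)]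
        exact hs.trans ((div_le_one (by linarith)).2 hq)
    _ ≤ 2 * (3 / q) := by rw [abs_of_nonneg (by linarith)]; linarith
    _ = 6 / q := by ring

/-- `K_q = 1 + O(1/q)` uniformly over odd prime powers `q`, where
`K_q = (1 - q⁻¹)^(-1/2) ∏_Q (1 - q^(-2 deg Q))^(-1/2)`, the product over monic
irreducibles `Q ∈ F_q[T]` with `χ_q(Q(0)) = -1`. -/
theorem Kq_tendsto_one :
    ∃ C : ℝ, 0 < C ∧
      ∀ (F : Type) [Field F] [Fintype F] [DecidableEq F], Odd (Fintype.card F) →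
        |Real.sqrt ((1 - (Fintype.card F : ℝ)⁻¹)⁻¹) *
            (∏' Q : {Q : F[X] // Q.Monic ∧ Irreducible Q ∧
                quadraticChar F (Q.eval 0) = -1},
              Real.sqrt ((1 - ((Fintype.card F : ℝ) ^ (2 * (Q : F[X]).natDegree))⁻¹)⁻¹))
          - 1| ≤ C / (Fintype.card F : ℝ) := by
  refine ⟨6, by norm_num, fun F _ _ _ hodd => ?_⟩
  have hq : 3 ≤ (Fintype.card F : ℝ) := by
    have := Fintype.one_lt_card (α := F)
    obtain ⟨k, hk⟩ := hodd
    exact_mod_cast (show 3 ≤ Fintype.card F by omega)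
  set q : ℝ := (Fintype.card F : ℝ)
  have hqinv : q⁻¹ ≤ 1 / 2 := by rw [inv_le_comm₀ (by linarith) (by norm_num)]; linarith
  have hdeg (Q : {Q : F[X] // Q.Monic ∧ Irreducible Q ∧ quadraticChar F (Q.eval 0) = -1}) :
      (Q : F[X]).Monic ∧ 0 < (Q : F[X]).natDegree :=
    ⟨Q.2.1, Q.2.2.1.natDegree_pos⟩
  obtain ⟨T, ⟨hT0, hTle⟩, hprod⟩ := exists_tprod_sqrt_inv_one_sub_eq_exp (B := (q - 1)⁻¹)
    (x := fun Q : {Q : F[X] // Q.Monic ∧ Irreducible Q ∧ quadraticChar F (Q.eval 0) = -1} =>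
      (q ^ (2 * (Q : F[X]).natDegree))⁻¹)
    (fun Q => ⟨by positivity, le_trans (inv_anti₀ (by linarith)
      (le_self_pow₀ (by linarith) (by linarith [(hdeg Q).2]))) hqinv⟩)
    (fun u => by
      simpa using sum_inv_card_pow_two_mul_natDegree_le (s := u.map (Function.Embedding.subtype _))
        fun P hP => by
          obtain ⟨Q, -, rfl⟩ := mem_map.1 hP
          exact hdeg Q)
  rw [hprod]
  exact abs_sqrt_inv_one_sub_inv_mul_exp_sub_one_le hq hT0 hTle
end

section
/- Let P ∈ F_q[T] be a monic irreducible polynomial. Then the polynomial P(−S²) ∈ F_q[S] (obtained by substituting T = −S²) is reducible in F_q[S] if and only if there exist A, B ∈ F_q[T] with P = A² + T·B². -/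
/-!
Write `σ h = h(-S)`. Every `h ∈ F[S]` splits as `h = a(-S²) + S · b(-S²)`, and then
`h · σ h = (a² + T b²)(-S²)`: the norm of `h` down to `F[T]` has the shape `a² + T b²`,
the same degree as `h`, and a square leading coefficient. If `P(-S²) = f g` with non-units
`f, g`, the norms of `f` and `g` multiply to `P²`, so by primality of `P` the norm of `f` is
associated to `P`; dividing by its square leading coefficient gives `P = A² + T B²`.
Conversely, `P = A² + T B²` factors `P(-S²)` as `h · σ h` with `deg h = deg P > 0`.
-/

open Polynomial

theorem associated_of_mul_eq_sq {M : Type*} [CommMonoidWithZero M] [IsCancelMulZero M]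
    {p x y : M} (hp : Prime p) (h : x * y = p ^ 2) (hx : ¬IsUnit x) (hy : ¬IsUnit y) :
    Associated x p := by
  obtain ⟨i, hi, hxi⟩ := (dvd_prime_pow hp 2).1 ⟨y, h.symm⟩
  interval_cases i
  · exact absurd (associated_one_iff_isUnit.1 (pow_zero p ▸ hxi)) hx
  · simpa using hxi
  · obtain ⟨u, rfl⟩ := hxi.symm
    refine absurd (IsUnit.of_mul_eq_one_right (u : M) ?_) hy
    refine mul_left_cancel₀ (pow_ne_zero 2 hp.ne_zero) ?_
    rw [← mul_assoc, h, mul_one]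

section CommRing

variable {R : Type*} [CommRing R]

theorem comp_neg_X_sq_eq_expand (f : R[X]) :
    f.comp (-(X ^ 2)) = expand R 2 (f.comp (-X)) := by
  rw [expand_eq_comp_X_pow, comp_assoc, neg_comp, X_comp]

theorem comp_neg_X_sq_injective : Function.Injective fun f : R[X] => f.comp (-(X ^ 2)) := by
  intro f g h
  simp only [comp_neg_X_sq_eq_expand] at h
  exact (Function.LeftInverse.injective comp_neg_X_comp_neg_X) (expand_injective two_pos h)

theorem comp_neg_X_sq_comp_neg_X (f : R[X]) :
    (f.comp (-(X ^ 2))).comp (-X) = f.comp (-(X ^ 2)) := by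
  rw [comp_assoc, neg_comp, pow_comp, X_comp, neg_sq]

theorem exists_eq_comp_neg_X_sq_add_X_mul_comp_neg_X_sq (h : R[X]) :
    ∃ a b : R[X], h = a.comp (-(X ^ 2)) + X * b.comp (-(X ^ 2)) := by
  induction h using Polynomial.induction_on' with
  | add p q hp hq =>
    obtain ⟨a, b, rfl⟩ := hp
    obtain ⟨a', b', rfl⟩ := hq
    exact ⟨a + a', b + b', by simp only [add_comp]; ring⟩
  | monomial n c =>
    obtain ⟨k, rfl | rfl⟩ := Nat.even_or_odd' n
    · refine ⟨C c * (-X) ^ k, 0, ?_⟩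
      simp only [← C_mul_X_pow_eq_monomial, mul_comp, C_comp, pow_comp, neg_comp, X_comp,
        neg_neg, zero_comp, mul_zero, add_zero, pow_mul]
    · refine ⟨0, C c * (-X) ^ k, ?_⟩
      simp only [← C_mul_X_pow_eq_monomial, mul_comp, C_comp, pow_comp, neg_comp, X_comp,
        neg_neg, zero_comp, zero_add, pow_succ, pow_mul]
      ring

theorem sq_add_X_mul_sq_comp_neg_X_sq (a b : R[X]) :
    (a ^ 2 + X * b ^ 2).comp (-(X ^ 2)) =
      (a.comp (-(X ^ 2)) + X * b.comp (-(X ^ 2))) *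
        (a.comp (-(X ^ 2)) + X * b.comp (-(X ^ 2))).comp (-X) := by
  simp only [add_comp, mul_comp, pow_comp, X_comp, comp_neg_X_sq_comp_neg_X]
  ring

theorem exists_sq_add_X_mul_sq_comp_neg_X_sq_eq (h : R[X]) :
    ∃ a b : R[X], (a ^ 2 + X * b ^ 2).comp (-(X ^ 2)) = h * h.comp (-X) := by
  obtain ⟨a, b, rfl⟩ := exists_eq_comp_neg_X_sq_add_X_mul_comp_neg_X_sq h
  exact ⟨a, b, sq_add_X_mul_sq_comp_neg_X_sq a b⟩

theorem not_isUnit_of_comp_neg_X_sq_eq_mul {n h : R[X]}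
    (hn : n.comp (-(X ^ 2)) = h * h.comp (-X)) (hh : ¬IsUnit h) : ¬IsUnit n := by
  intro hu
  have hu' : IsUnit (n.comp (-(X ^ 2))) := hu.map (compRingHom (-(X ^ 2)))
  rw [hn] at hu'
  exact hh (isUnit_of_mul_isUnit_left hu')

end CommRing

section IsDomain

variable {R : Type*} [CommRing R] [IsDomain R]

theorem natDegree_comp_neg_X_sq (f : R[X]) :
    (f.comp (-(X ^ 2))).natDegree = 2 * f.natDegree := by
  simp [natDegree_comp, mul_comm]

theorem natDegree_eq_of_comp_neg_X_sq_eq_mul {n h : R[X]}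
    (hn : n.comp (-(X ^ 2)) = h * h.comp (-X)) : n.natDegree = h.natDegree := by
  rcases eq_or_ne h 0 with rfl | h0
  · rw [zero_mul, ← zero_comp (p := -(X ^ 2))] at hn
    rw [comp_neg_X_sq_injective hn]
  have := congrArg natDegree hn
  rw [natDegree_comp_neg_X_sq, natDegree_mul h0 (comp_neg_X_eq_zero_iff.not.2 h0),
    natDegree_comp] at this
  simp only [natDegree_neg, natDegree_X, mul_one] at this
  omega

theorem leadingCoeff_eq_sq_of_comp_neg_X_sq_eq_mul {n h : R[X]}
    (hn : n.comp (-(X ^ 2)) = h * h.comp (-X)) : n.leadingCoeff = h.leadingCoeff ^ 2 := by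
  set s : R := (-1) ^ h.natDegree
  have hs : s ^ 2 = 1 := by rw [← pow_mul, mul_comm, pow_mul, neg_one_sq, one_pow]
  have hlc := congrArg leadingCoeff hn
  rw [leadingCoeff_comp (by simp), leadingCoeff_mul, comp_neg_X_leadingCoeff_eq,
    natDegree_eq_of_comp_neg_X_sq_eq_mul hn] at hlc
  simp only [leadingCoeff_neg, leadingCoeff_X_pow] at hlc
  linear_combination s * hlc - (n.leadingCoeff - h.leadingCoeff ^ 2) * hs

theorem not_irreducible_of_comp_neg_X_sq_eq_mul {n h : R[X]} (hn0 : 0 < n.natDegree)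
    (hn : n.comp (-(X ^ 2)) = h * h.comp (-X)) : ¬Irreducible (n.comp (-(X ^ 2))) := by
  have hh : 0 < h.natDegree := natDegree_eq_of_comp_neg_X_sq_eq_mul hn ▸ hn0
  rw [hn]
  refine fun hirr => (hirr.isUnit_or_isUnit rfl).elim ?_ ?_
  · exact not_isUnit_of_natDegree_pos h hh
  · exact not_isUnit_of_natDegree_pos _ (by simpa [natDegree_comp] using hh)

end IsDomain

theorem Polynomial.Monic.exists_eq_sq_add_X_mul_sq_of_associated {F : Type*} [Field F]
    {P a b : F[X]} {d : F} (hP : P.Monic) (hd : (a ^ 2 + X * b ^ 2).leadingCoeff = d ^ 2)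
    (h : Associated (a ^ 2 + X * b ^ 2) P) : ∃ A B : F[X], P = A ^ 2 + X * B ^ 2 := by
  have hd0 : d ≠ 0 := by
    rintro rfl
    exact hP.ne_zero (h.eq_zero_iff.1 (leadingCoeff_eq_zero.1 (by simpa using hd)))
  have hscale :
      (C d⁻¹ * a) ^ 2 + X * (C d⁻¹ * b) ^ 2 = C (d⁻¹ ^ 2) * (a ^ 2 + X * b ^ 2) := by
    simp only [map_pow]
    ring
  refine ⟨C d⁻¹ * a, C d⁻¹ * b, eq_of_monic_of_associated hP ?_ ?_⟩
  · rw [hscale, Monic, leadingCoeff_mul, leadingCoeff_C, hd, ← mul_pow, inv_mul_cancel₀ hd0,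
      one_pow]
  · rw [hscale]
    exact h.symm.trans (associated_unit_mul_left _ _ (isUnit_C.2 (hd0.isUnit.inv.pow 2))).symm

theorem reducible_iff_sum_of_squares_general (F : Type) [Field F] (P : F[X]) (hP : P.Monic)
    (hirr : Irreducible P) :
    ¬ Irreducible (P.comp (-(X ^ 2))) ↔ ∃ A B : F[X], P = A ^ 2 + X * B ^ 2 := by
  constructor
  · intro hred
    have hQ : ¬IsUnit (P.comp (-(X ^ 2))) := not_isUnit_of_natDegree_pos _ <| by
      rw [natDegree_comp_neg_X_sq]
      exact Nat.mul_pos two_pos hirr.natDegree_pos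
    obtain ⟨f, g, hfg, hf, hg⟩ :
        ∃ f g, P.comp (-(X ^ 2)) = f * g ∧ ¬IsUnit f ∧ ¬IsUnit g := by
      simpa [irreducible_iff, hQ] using hred
    obtain ⟨a, b, hab⟩ := exists_sq_add_X_mul_sq_comp_neg_X_sq_eq f
    obtain ⟨c, d, hcd⟩ := exists_sq_add_X_mul_sq_comp_neg_X_sq_eq g
    have hnorm : (a ^ 2 + X * b ^ 2) * (c ^ 2 + X * d ^ 2) = P ^ 2 := by
      refine comp_neg_X_sq_injective ?_
      calc ((a ^ 2 + X * b ^ 2) * (c ^ 2 + X * d ^ 2)).comp (-(X ^ 2))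
          = f * f.comp (-X) * (g * g.comp (-X)) := by rw [mul_comp, hab, hcd]
        _ = (f * g) * (f * g).comp (-X) := by rw [mul_comp]; ring
        _ = (P ^ 2).comp (-(X ^ 2)) := by
          rw [← hfg, comp_neg_X_sq_comp_neg_X, pow_comp]; ring
    exact hP.exists_eq_sq_add_X_mul_sq_of_associated
      (leadingCoeff_eq_sq_of_comp_neg_X_sq_eq_mul hab)
      (associated_of_mul_eq_sq hirr.prime hnorm (not_isUnit_of_comp_neg_X_sq_eq_mul hab hf)
        (not_isUnit_of_comp_neg_X_sq_eq_mul hcd hg))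
  · rintro ⟨A, B, rfl⟩
    exact not_irreducible_of_comp_neg_X_sq_eq_mul hirr.natDegree_pos
      (sq_add_X_mul_sq_comp_neg_X_sq A B)

/-- For a monic irreducible `P ∈ F_q[T]` (`q` odd), `P(-S²)` is reducible in
`F_q[S]` if and only if `P = A² + T·B²` for some `A, B ∈ F_q[T]`. -/
theorem reducible_iff_sum_of_squares (F : Type) [Field F] [Fintype F]
    (hq : Odd (Fintype.card F)) (P : F[X]) (hP : P.Monic) (hirr : Irreducible P) :
    ¬ Irreducible (P.comp (-(X ^ 2))) ↔ ∃ A B : F[X], P = A ^ 2 + X * B ^ 2 :=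
  reducible_iff_sum_of_squares_general F P hP hirr
end

section
/- Let P ∈ F_q[T] be a monic irreducible polynomial, and suppose P = A² + T·B² for some A, B ∈ F_q[T]. Then, viewing A and B inside F_q[S] via T = −S², both polynomials A(−S²) + S·B(−S²) and A(−S²) − S·B(−S²) are irreducible in F_q[S]. -/
open Polynomial

/-!
With `f = A(-S²) + S·B(-S²)` we have `f(-S) = A(-S²) - S·B(-S²)` and `f(S)·f(-S) = P(-S²)`, so
`deg f = deg f(-S) = deg P`. If `g` is an irreducible factor of `P(Q)` and `s` a root of `g`,
then `Q(s)` is a root of `P`, so `deg P ≤ [K(s) : K] = deg g`. Hence a factor of `P(-S²)` of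
degree `deg P` admits no proper factorisation.
-/

section Field

variable {K : Type*} [Field K]

theorem natDegree_le_of_irreducible_dvd_comp {P Q g : K[X]} (hP : Irreducible P)
    (hg : Irreducible g) (hdvd : g ∣ P.comp Q) : P.natDegree ≤ g.natDegree := by
  have : Fact (Irreducible g) := ⟨hg⟩
  have := (AdjoinRoot.powerBasis hg.ne_zero).finite
  let x : AdjoinRoot g := aeval (AdjoinRoot.root g) Q
  have hx : aeval x P = 0 := by
    rw [← aeval_comp, AdjoinRoot.aeval_eq, AdjoinRoot.mk_eq_zero]
    exact hdvd
  calc P.natDegree = (minpoly K x).natDegree := by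
        rw [← minpoly.eq_of_irreducible hP hx,
          natDegree_mul_C (inv_ne_zero (leadingCoeff_ne_zero.2 hP.ne_zero))]
    _ ≤ Module.finrank K (AdjoinRoot g) := minpoly.natDegree_le x
    _ = g.natDegree := (AdjoinRoot.powerBasis hg.ne_zero).finrank

theorem irreducible_of_dvd_comp_of_natDegree_le {P Q f : K[X]} (hP : Irreducible P)
    (hdvd : f ∣ P.comp Q) (hf : 0 < f.natDegree) (hle : f.natDegree ≤ P.natDegree) :
    Irreducible f := by
  have hf0 : f ≠ 0 := ne_zero_of_natDegree_gt hf
  obtain ⟨g, hg, h, rfl⟩ :=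
    WfDvdMonoid.exists_irreducible_factor (not_isUnit_of_natDegree_pos _ hf) hf0
  have hh0 : h ≠ 0 := right_ne_zero_of_mul hf0
  have hPg := natDegree_le_of_irreducible_dvd_comp hP hg (dvd_trans (dvd_mul_right g h) hdvd)
  have hh : h.natDegree = 0 := by
    rw [natDegree_mul hg.ne_zero hh0] at hle
    omega
  have hunit : IsUnit h :=
    isUnit_iff_degree_eq_zero.2 ((degree_eq_iff_natDegree_eq hh0).2 hh)
  exact (irreducible_mul_isUnit hunit).2 hg

theorem irreducible_of_mul_comp_neg_X_eq_comp_neg_X_sq {P f : K[X]} (hP : Irreducible P)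
    (hnorm : f * f.comp (-X) = P.comp (-(X ^ 2))) : Irreducible f := by
  have hdegP : (P.comp (-(X ^ 2))).natDegree = P.natDegree * 2 := by
    simp [natDegree_comp]
  have hPpos := hP.natDegree_pos
  have hne : f * f.comp (-X) ≠ 0 := by
    intro h
    rw [hnorm] at h
    rw [h, natDegree_zero] at hdegP
    omega
  have hdeg : f.natDegree + f.natDegree = P.natDegree * 2 := by
    rw [← hdegP, ← hnorm, natDegree_mul (left_ne_zero_of_mul hne) (right_ne_zero_of_mul hne),
      natDegree_comp]
    simp
  exact irreducible_of_dvd_comp_of_natDegree_le hP (hnorm ▸ dvd_mul_right f _) (by omega)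
    (by omega)

end Field

theorem factors_irreducible_general (F : Type) [Field F] (P A B : F[X]) (hirr : Irreducible P)
    (hPAB : P = A ^ 2 + X * B ^ 2) :
    Irreducible (A.comp (-(X ^ 2)) + X * B.comp (-(X ^ 2))) ∧
      Irreducible (A.comp (-(X ^ 2)) - X * B.comp (-(X ^ 2))) := by
  set f := A.comp (-(X ^ 2)) + X * B.comp (-(X ^ 2))
  set f' := A.comp (-(X ^ 2)) - X * B.comp (-(X ^ 2))
  have hswap : f.comp (-X) = f' := by
    simp only [f, f', add_comp, mul_comp, X_comp, comp_assoc, neg_comp, pow_comp, neg_sq]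
    ring
  have hnorm : f * f' = P.comp (-(X ^ 2)) := by
    simp only [f, f', hPAB, add_comp, mul_comp, pow_comp, X_comp]
    ring
  refine ⟨irreducible_of_mul_comp_neg_X_eq_comp_neg_X_sq hirr (hswap ▸ hnorm),
    irreducible_of_mul_comp_neg_X_eq_comp_neg_X_sq hirr ?_⟩
  rw [← hswap, comp_neg_X_comp_neg_X, mul_comm, hswap, hnorm]

/-- If a monic irreducible `P ∈ F_q[T]` (`q` odd) satisfies `P = A² + T·B²`,
then `A(-S²) ± S·B(-S²)` are both irreducible in `F_q[S]`. -/
theorem factors_irreducible (F : Type) [Field F] [Fintype F]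
    (hq : Odd (Fintype.card F)) (P A B : F[X]) (hP : P.Monic) (hirr : Irreducible P)
    (hPAB : P = A ^ 2 + X * B ^ 2) :
    Irreducible (A.comp (-(X ^ 2)) + X * B.comp (-(X ^ 2))) ∧
      Irreducible (A.comp (-(X ^ 2)) - X * B.comp (-(X ^ 2))) :=
  factors_irreducible_general F P A B hirr hPAB
end

section
/- Let P ∈ F_q[T] be a monic irreducible polynomial with P ≠ T. If P(−S²) is reducible in F_q[S], then χ_q(P(0)) = 1, i.e., the Legendre symbol (P/T) equals 1. -/
/-!
Let `A` be a factor of `P(-S²)` of degree at most `deg P`, which exists because the product has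
degree `2 deg P`. Sending the root `α` of `P` to `-s²`, with `s` the class of `S` modulo `A`, embeds
`F[T]/(P)` into `F[S]/(A)`, and counting dimensions shows that the embedding is onto. Hence `-α`
is a square `u²` in `F[T]/(P)`, and taking norms gives `P(0) = N(-α) = N(u)²`; here `P(0) ≠ 0`
because `P` is irreducible and different from `T`.
-/

open Polynomial

section

variable {F : Type*} [Field F]

theorem AdjoinRoot.finrank_eq_natDegree (q : F[X]) :
    Module.finrank F (AdjoinRoot q) = q.natDegree :=
  finrank_quotient_span_eq_natDegree

theorem Irreducible.exists_aeval_eq_root_of_dvd_comp {P q g : F[X]} (hP : Irreducible P)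
    (hq : 0 < q.natDegree) (hqP : q.natDegree ≤ P.natDegree) (hdvd : q ∣ P.comp g) :
    ∃ x : AdjoinRoot P, aeval x g = AdjoinRoot.root P := by
  have := Fact.mk hP
  have hq0 : q ≠ 0 := ne_zero_of_natDegree_gt hq
  have := AdjoinRoot.nontrivial q (by rw [degree_eq_natDegree hq0]; exact_mod_cast hq.ne')
  have : FiniteDimensional F (AdjoinRoot q) := (AdjoinRoot.powerBasis hq0).finite
  have : FiniteDimensional F (AdjoinRoot P) := (AdjoinRoot.powerBasis hP.ne_zero).finite
  have hroot : aeval (aeval (AdjoinRoot.root q) g) P = 0 := by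
    rw [← aeval_comp, AdjoinRoot.aeval_eq, AdjoinRoot.mk_eq_zero.mpr hdvd]
  let φ : AdjoinRoot P →ₐ[F] AdjoinRoot q :=
    AdjoinRoot.liftAlgHom P (Algebra.ofId F _) _ (by rwa [aeval_def] at hroot)
  have hinj : Function.Injective φ := φ.toRingHom.injective
  have hfinrank : Module.finrank F (AdjoinRoot P) = Module.finrank F (AdjoinRoot q) :=
    (φ.toLinearMap.finrank_le_finrank_of_injective hinj).antisymm
      (by rwa [AdjoinRoot.finrank_eq_natDegree, AdjoinRoot.finrank_eq_natDegree])
  have hsurj : Function.Surjective φ :=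
    (LinearMap.injective_iff_surjective_of_finrank_eq_finrank (f := φ.toLinearMap) hfinrank).mp hinj
  obtain ⟨x, hx⟩ := hsurj (AdjoinRoot.root q)
  refine ⟨x, hinj ?_⟩
  rw [← aeval_algHom_apply, hx]
  exact (AdjoinRoot.liftAlgHom_root ..).symm

theorem Irreducible.exists_aeval_eq_root_of_not_irreducible_comp {P g : F[X]}
    (hP : Irreducible P) (hg : g.natDegree = 2) (h : ¬ Irreducible (P.comp g)) :
    ∃ x : AdjoinRoot P, aeval x g = AdjoinRoot.root P := by
  have hdeg : (P.comp g).natDegree = P.natDegree * 2 := by rw [natDegree_comp, hg]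
  have hPdeg := natDegree_pos_iff_degree_pos.mpr (degree_pos_of_irreducible hP)
  have hcomp0 : P.comp g ≠ 0 := fun h0 => by rw [h0, natDegree_zero] at hdeg; omega
  rw [irreducible_iff_lt_natDegree_lt hcomp0 (not_isUnit_of_natDegree_pos _ (by omega))] at h
  push Not at h
  obtain ⟨q, -, hqdeg, hdvd⟩ := h
  rw [Finset.mem_Ioc, hdeg, Nat.mul_div_cancel _ two_pos] at hqdeg
  exact hP.exists_aeval_eq_root_of_dvd_comp hqdeg.1 hqdeg.2 hdvd

namespace Polynomial.Monic

theorem norm_neg_root {P : F[X]} (hP : P.Monic) :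
    Algebra.norm F (-AdjoinRoot.root P) = P.coeff 0 := by
  have hnorm := Algebra.PowerBasis.norm_gen_eq_coeff_zero_minpoly (AdjoinRoot.powerBasis hP.ne_zero)
  rw [AdjoinRoot.minpoly_powerBasis_gen_of_monic hP, AdjoinRoot.powerBasis_gen,
    AdjoinRoot.powerBasis_dim] at hnorm
  have hneg : -AdjoinRoot.root P = algebraMap F _ (-1) * AdjoinRoot.root P := by simp
  rw [hneg, map_mul, Algebra.norm_algebraMap, hnorm, AdjoinRoot.finrank_eq_natDegree,
    ← mul_assoc, ← mul_pow, neg_one_mul, neg_neg, one_pow, one_mul]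

theorem coeff_zero_ne_zero_of_irreducible {P : F[X]} (hP : P.Monic) (hirr : Irreducible P)
    (hPX : P ≠ X) : P.coeff 0 ≠ 0 := fun h0 =>
  hPX (eq_of_monic_of_associated hP monic_X
    (irreducible_X.associated_of_dvd hirr (X_dvd_iff.mpr h0)).symm)

end Polynomial.Monic

end

theorem legendre_one_of_reducible_general (F : Type) [Field F] [Fintype F] [DecidableEq F]
    (P : F[X]) (hP : P.Monic) (hirr : Irreducible P)
    (hPT : P ≠ X) (hred : ¬ Irreducible (P.comp (-(X ^ 2)))) :
    quadraticChar F (P.eval 0) = 1 := by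
  obtain ⟨x, hx⟩ := hirr.exists_aeval_eq_root_of_not_irreducible_comp
    (by rw [natDegree_neg, natDegree_X_pow]) hred
  rw [map_neg, map_pow, aeval_X] at hx
  have hsquare : IsSquare (P.coeff 0) :=
    ⟨Algebra.norm F x, by rw [← hP.norm_neg_root, ← hx, neg_neg, sq, map_mul]⟩
  rw [← coeff_zero_eq_eval_zero]
  exact (quadraticChar_one_iff_isSquare (hP.coeff_zero_ne_zero_of_irreducible hirr hPT)).mpr hsquare

/-- If `P ≠ T` is a monic irreducible in `F_q[T]` (`q` odd) such that `P(-S²)`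
is reducible in `F_q[S]`, then the Legendre symbol `(P/T) = χ_q(P(0))` is `1`. -/
theorem legendre_one_of_reducible (F : Type) [Field F] [Fintype F] [DecidableEq F]
    (hq : Odd (Fintype.card F)) (P : F[X]) (hP : P.Monic) (hirr : Irreducible P)
    (hPT : P ≠ X) (hred : ¬ Irreducible (P.comp (-(X ^ 2)))) :
    quadraticChar F (P.eval 0) = 1 :=
  legendre_one_of_reducible_general F P hP hirr hPT hred
end

section
/- Let P ∈ F_q[T] be a monic irreducible polynomial of degree at least 1. If χ_q(P(0)) = 1 (i.e., the Legendre symbol (P/T) equals 1), then P(−S²) is reducible in F_q[S]. -/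
/-!
Let `K = F[T]/(P)`, a field with `q ^ n` elements, and `t` the class of `T`. The norm of `-t`
is `P(0)`, a square in `F`. Since `x ^ ((q ^ n - 1) / 2) = N(x) ^ ((q - 1) / 2)` for `x ∈ Kˣ`,
Euler's criterion makes `-t = u²` a square in `K`. Then `u` is a root of `P(-S²)`, whose degree
`2n` exceeds `[K : F] = n`, so `P(-S²)` cannot be irreducible.
-/

open Polynomial

theorem Nat.pow_div_two_eq_of_odd {q : ℕ} (hq : Odd q) (d : ℕ) :
    q ^ d / 2 = (q ^ d - 1) / (q - 1) * (q / 2) := by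
  obtain ⟨m, rfl⟩ := hq
  obtain ⟨S, hS⟩ := Nat.sub_one_dvd_pow_sub_one (2 * m + 1) d
  have hpos := Nat.one_le_pow d (2 * m + 1) (by omega)
  rcases Nat.eq_zero_or_pos m with rfl | hm
  · simp
  have hhalf : (2 * m + 1) / 2 = m := by omega
  rw [hS, hhalf, Nat.add_sub_cancel, Nat.mul_div_cancel_left _ (by omega), mul_comm S]
  rw [Nat.add_sub_cancel, mul_assoc] at hS
  omega

namespace FiniteField

theorem isSquare_of_isSquare_norm {K L : Type*} [Field K] [Field L] [Finite L] [Algebra K L]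
    (hK : ringChar K ≠ 2) {x : L} (hx : IsSquare (Algebra.norm K x)) : IsSquare x := by
  rcases eq_or_ne x 0 with rfl | hx0
  · exact IsSquare.zero
  have := Finite.of_injective _ (algebraMap K L).injective
  have := Fintype.ofFinite K
  have := Fintype.ofFinite L
  obtain ⟨y, hy⟩ := hx
  have hy0 : y ≠ 0 := by
    rintro rfl
    exact hx0 (by simpa using hy)
  have hnorm := algebraMap_norm_eq_pow (K := K) (x := x)
  simp only [Nat.card_eq_fintype_card] at hnorm
  have hexp : Fintype.card L / 2 =
      (Fintype.card L - 1) / (Fintype.card K - 1) * (Fintype.card K / 2) := by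
    rw [Module.card_eq_pow_finrank (K := K)]
    exact Nat.pow_div_two_eq_of_odd (Nat.odd_iff.mpr (odd_card_of_char_ne_two hK)) _
  -- Euler's criterion: `x ^ (#L / 2) = N(x) ^ (#K / 2) = y ^ (#K - 1) = 1`.
  rw [isSquare_iff (Algebra.ringChar_eq K L ▸ hK) hx0, hexp, pow_mul, ← hnorm,
    hy, ← map_pow, ← sq, ← pow_mul, Nat.two_mul_odd_div_two (odd_card_of_char_ne_two hK),
    pow_card_sub_one_eq_one y hy0, map_one]

end FiniteField

theorem AdjoinRoot.norm_neg_root {K : Type*} [Field K] {f : K[X]} (hf : f.Monic) :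
    Algebra.norm K (-root f) = f.coeff 0 := by
  let pb := powerBasis hf.ne_zero
  have hneg : -root f = algebraMap K (AdjoinRoot f) (-1) * pb.gen := by simp [pb]
  rw [hneg, map_mul, Algebra.norm_algebraMap, Algebra.PowerBasis.norm_gen_eq_coeff_zero_minpoly,
    minpoly_powerBasis_gen_of_monic hf, pb.finrank, powerBasis_dim, ← mul_assoc, ← mul_pow,
    neg_one_mul, neg_neg, one_pow, one_mul]

theorem Polynomial.Irreducible.natDegree_le_finrank {K L : Type*} [Field K] [Field L]
    [Algebra K L] [FiniteDimensional K L] {f : K[X]} (hf : Irreducible f) {x : L}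
    (hx : aeval x f = 0) : f.natDegree ≤ Module.finrank K L := by
  rw [minpoly.Irreducible.eq_minpoly hf hx,
    natDegree_C_mul (leadingCoeff_ne_zero.mpr hf.ne_zero)]
  exact minpoly.natDegree_le x

/-- If `P` is a monic irreducible in `F_q[T]` (`q` odd) of degree at least `1`
with Legendre symbol `(P/T) = χ_q(P(0)) = 1`, then `P(-S²)` is reducible in
`F_q[S]`. -/
theorem reducible_of_legendre_one (F : Type) [Field F] [Fintype F] [DecidableEq F]
    (hq : Odd (Fintype.card F)) (P : F[X]) (hP : P.Monic) (hirr : Irreducible P)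
    (hdeg : 1 ≤ P.natDegree) (hleg : quadraticChar F (P.eval 0) = 1) :
    ¬ Irreducible (P.comp (-(X ^ 2))) := by
  intro hcomp
  have : Fact (Irreducible P) := ⟨hirr⟩
  let pb := AdjoinRoot.powerBasis hP.ne_zero
  have : FiniteDimensional F (AdjoinRoot P) := pb.finite
  have : Finite (AdjoinRoot P) := Module.finite_of_finite F
  have hchar : ringChar F ≠ 2 := fun h ↦ by
    have := FiniteField.even_card_iff_char_two.mp h
    have := Nat.odd_iff.mp hq
    omega
  have hP0 : P.eval 0 ≠ 0 := fun h ↦ by simp [h] at hleg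
  obtain ⟨u, hu⟩ : IsSquare (-AdjoinRoot.root P) := by
    refine FiniteField.isSquare_of_isSquare_norm hchar ?_
    rw [AdjoinRoot.norm_neg_root hP, coeff_zero_eq_eval_zero]
    exact (quadraticChar_one_iff_isSquare hP0).mp hleg
  have hroot : aeval u (P.comp (-(X ^ 2))) = 0 := by
    rw [aeval_comp, map_neg, map_pow, aeval_X, sq, ← hu, neg_neg, AdjoinRoot.aeval_eq,
      AdjoinRoot.mk_self]
  have hle := hcomp.natDegree_le_finrank hroot
  rw [natDegree_comp, natDegree_neg, natDegree_X_pow, pb.finrank,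
    AdjoinRoot.powerBasis_dim] at hle
  omega
end

section
/- For every odd prime power q and each α ∈ {1, −1}, the number of monic irreducible polynomials R ∈ F_q[T] of degree 2 with χ_q(R(0)) = α equals (1/4)·q² − ((1 + α)/4)·q + α/4. -/
/-!
A monic quadratic `X ^ 2 + b X + c` is irreducible exactly when its discriminant `b ^ 2 - 4 c` is
a nonsquare, and its value at `0` is `c`. Fix `c` with `χ c = α`. The character sum
`∑ b, χ (b ^ 2 - 4 c)` equals `-1` (it reduces to a Jacobi sum), and `b ^ 2 = 4 c` has `1 + α`
solutions, so exactly `(q - α) / 2` values of `b` make the discriminant a nonsquare. There are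
`(q - 1) / 2` such `c`, so the count is `(q - 1)(q - α) / 4`.
-/

open Polynomial Finset

section MonicQuadratics

variable {R : Type*} [CommRing R]

theorem injective_X_sq_add_C_mul_X_add_C :
    Function.Injective fun p : R × R => X ^ 2 + C p.1 * X + C p.2 := by
  intro p q h
  have h0 := congrArg (coeff · 0) h
  have h1 := congrArg (coeff · 1) h
  simp only [coeff_add, coeff_X_pow, coeff_C_mul_X, coeff_C, OfNat.zero_ne_ofNat, one_ne_zero,
    OfNat.one_ne_ofNat, zero_ne_one, if_true, if_false, zero_add, add_zero] at h0 h1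
  exact Prod.ext h1 h0

theorem range_X_sq_add_C_mul_X_add_C [Nontrivial R] :
    Set.range (fun p : R × R => X ^ 2 + C p.1 * X + C p.2) = {p | p.Monic ∧ p.natDegree = 2} := by
  ext p
  constructor
  · rintro ⟨⟨b, c⟩, rfl⟩
    dsimp only
    refine ⟨?_, by compute_degree!⟩
    rw [add_assoc]
    exact monic_X_pow_add (degree_linear_le.trans_lt (by norm_num))
  · rintro ⟨hm, hd⟩
    refine ⟨(p.coeff 1, p.coeff 0), ?_⟩
    conv_rhs => rw [hm.as_sum, hd]
    simp only [sum_range_succ, sum_range_zero, pow_zero, pow_one, mul_one]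
    ring

variable {K : Type*} [Field K] [NeZero (2 : K)]

theorem exists_isRoot_X_sq_add_C_mul_X_add_C_iff (b c : K) :
    (∃ x, (X ^ 2 + C b * X + C c).IsRoot x) ↔ IsSquare (discrim 1 b c) := by
  have heval (x : K) : (X ^ 2 + C b * X + C c).IsRoot x ↔ 1 * (x * x) + b * x + c = 0 := by
    simp [sq]
  simp only [heval]
  refine ⟨fun ⟨x, hx⟩ => ⟨2 * 1 * x + b, ?_⟩, exists_quadratic_eq_zero one_ne_zero⟩
  rw [← sq]
  exact (quadratic_eq_zero_iff_discrim_eq_sq one_ne_zero x).1 hx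

theorem irreducible_X_sq_add_C_mul_X_add_C_iff (b c : K) :
    Irreducible (X ^ 2 + C b * X + C c) ↔ ¬IsSquare (discrim 1 b c) := by
  have hdeg : (X ^ 2 + C b * X + C c).natDegree = 2 := by compute_degree!
  have hne : X ^ 2 + C b * X + C c ≠ 0 := ne_zero_of_natDegree_gt (hdeg ▸ one_lt_two)
  rw [irreducible_iff_roots_eq_zero_of_degree_le_three hdeg.ge (by omega),
    ← exists_isRoot_X_sq_add_C_mul_X_add_C_iff, Multiset.eq_zero_iff_forall_notMem, not_exists]
  simp only [mem_roots hne]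

theorem setOf_monic_irreducible_natDegree_eq_two (P : K → Prop) :
    {R : K[X] | R.Monic ∧ Irreducible R ∧ R.natDegree = 2 ∧ P (R.eval 0)}
      = (fun p : K × K => X ^ 2 + C p.1 * X + C p.2) ''
          {p | ¬IsSquare (discrim 1 p.1 p.2) ∧ P p.2} := by
  ext R
  constructor
  · rintro ⟨hm, hirr, hd, hP⟩
    obtain ⟨⟨b, c⟩, rfl⟩ : R ∈ Set.range fun p : K × K => X ^ 2 + C p.1 * X + C p.2 := by
      rw [range_X_sq_add_C_mul_X_add_C]
      exact ⟨hm, hd⟩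
    exact ⟨(b, c), ⟨(irreducible_X_sq_add_C_mul_X_add_C_iff b c).1 hirr, by simpa using hP⟩, rfl⟩
  · rintro ⟨⟨b, c⟩, ⟨hdisc, hP⟩, rfl⟩
    obtain ⟨hm, hd⟩ : X ^ 2 + C b * X + C c ∈ {p : K[X] | p.Monic ∧ p.natDegree = 2} :=
      range_X_sq_add_C_mul_X_add_C (R := K) ▸ Set.mem_range_self (b, c)
    exact ⟨hm, (irreducible_X_sq_add_C_mul_X_add_C_iff b c).2 hdisc, hd, by simpa using hP⟩

end MonicQuadratics

section QuadraticCharCounts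

variable {F : Type*} [Field F] [Fintype F] [DecidableEq F]

theorem two_mul_card_quadraticChar_eq_add_card_eq_zero {ι : Type*} [Fintype ι] (f : ι → F)
    {α : ℤ} (hα : α = 1 ∨ α = -1) :
    2 * (#{i | quadraticChar F (f i) = α} : ℤ) + #{i | f i = 0}
      = Fintype.card ι + α * ∑ i, quadraticChar F (f i) := by
  simp only [natCast_card_filter, mul_sum, ← sum_add_distrib, Fintype.card_eq_sum_ones,
    Nat.cast_sum, Nat.cast_one]
  refine sum_congr rfl fun i _ => ?_
  rcases eq_or_ne (f i) 0 with h0 | h0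
  · rcases hα with rfl | rfl <;> simp [h0]
  · rcases quadraticChar_dichotomy h0 with h | h <;> rcases hα with rfl | rfl <;> simp [h, h0]

theorem sum_quadraticChar_mul_quadraticChar_sub (hF : ringChar F ≠ 2) {k : F} (hk : k ≠ 0) :
    ∑ v, quadraticChar F v * quadraticChar F (v - k) = -1 := by
  have hJ : jacobiSum (quadraticChar F) (quadraticChar F) = -quadraticChar F (-1) := by
    simpa only [(quadraticChar_isQuadratic F).inv] using
      jacobiSum_nontrivial_inv (quadraticChar_ne_one hF)
  calc ∑ v, quadraticChar F v * quadraticChar F (v - k)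
      = ∑ x, quadraticChar F (k * x) * quadraticChar F (k * x - k) :=
        (Equiv.sum_comp (Equiv.mulLeft₀ k hk) _).symm
    _ = ∑ x, quadraticChar F (-1) * (quadraticChar F x * quadraticChar F (1 - x)) := by
        refine sum_congr rfl fun x _ => ?_
        rw [← map_mul, show k * x * (k * x - k) = k ^ 2 * (-1 * (x * (1 - x))) by ring,
          map_mul, quadraticChar_sq_one' hk, one_mul, map_mul, map_mul]
    _ = -1 := by
        rw [← mul_sum, ← jacobiSum, hJ, mul_neg, ← sq, quadraticChar_sq_one (by simp)]

theorem sum_quadraticChar_sq_sub (hF : ringChar F ≠ 2) {k : F} (hk : k ≠ 0) :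
    ∑ b, quadraticChar F (b ^ 2 - k) = -1 := by
  calc ∑ b, quadraticChar F (b ^ 2 - k)
      = ∑ v, (#{b | b ^ 2 = v} : ℤ) * quadraticChar F (v - k) := by
        rw [← sum_fiberwise' univ (· ^ 2) (fun v => quadraticChar F (v - k))]
        simp only [sum_const, nsmul_eq_mul]
    _ = ∑ v, quadraticChar F v * quadraticChar F (v - k) + ∑ v, quadraticChar F (v - k) := by
        rw [← sum_add_distrib]
        refine sum_congr rfl fun v _ => ?_
        rw [← Set.toFinset_ofPred, quadraticChar_card_sqrts hF]
        ring
    _ = -1 := by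
        rw [sum_quadraticChar_mul_quadraticChar_sub hF hk,
          Fintype.sum_equiv (Equiv.subRight k) (fun v => quadraticChar F (v - k))
            (quadraticChar F) fun _ => rfl,
          quadraticChar_sum_zero hF, add_zero]

theorem two_mul_card_quadraticChar_eq (hF : ringChar F ≠ 2) {α : ℤ} (hα : α = 1 ∨ α = -1) :
    2 * (#{c : F | quadraticChar F c = α} : ℤ) = Fintype.card F - 1 := by
  have h := two_mul_card_quadraticChar_eq_add_card_eq_zero (id : F → F) hα
  simp only [id, quadraticChar_sum_zero hF, mul_zero, add_zero, filter_eq', mem_univ, if_true,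
    card_singleton, Nat.cast_one] at h
  linarith

theorem two_mul_card_quadraticChar_discrim_eq_neg_one (hF : ringChar F ≠ 2) {α : ℤ}
    (hα : α = 1 ∨ α = -1) {c : F} (hc : quadraticChar F c = α) :
    2 * (#{b : F | quadraticChar F (discrim 1 b c) = -1} : ℤ) = Fintype.card F - α := by
  have hc0 : c ≠ 0 := by
    rintro rfl
    rcases hα with rfl | rfl <;> simp at hc
  have h4 : (4 : F) = 2 ^ 2 := by norm_num
  have h4c : 4 * c ≠ 0 := mul_ne_zero (h4 ▸ pow_ne_zero 2 (Ring.two_ne_zero hF)) hc0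
  have hzeros : (#{b : F | discrim 1 b c = 0} : ℤ) = α + 1 := by
    simp only [discrim, mul_one, sub_eq_zero]
    rw [← Set.toFinset_ofPred, quadraticChar_card_sqrts hF, h4, map_mul,
      quadraticChar_sq_one' (Ring.two_ne_zero hF), one_mul, hc]
  have h := two_mul_card_quadraticChar_eq_add_card_eq_zero (fun b => discrim 1 b c)
    (α := -1) (by simp)
  simp only [discrim, mul_one] at h hzeros ⊢
  rw [sum_quadraticChar_sq_sub hF h4c] at h
  linarith

theorem four_mul_card_not_isSquare_discrim (hF : ringChar F ≠ 2) {α : ℤ}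
    (hα : α = 1 ∨ α = -1) :
    4 * (#{p : F × F | ¬IsSquare (discrim 1 p.1 p.2) ∧ quadraticChar F p.2 = α} : ℤ)
      = (Fintype.card F - 1) * (Fintype.card F - α) := by
  have hfib : (#{p : F × F | ¬IsSquare (discrim 1 p.1 p.2) ∧ quadraticChar F p.2 = α} : ℤ)
      = ∑ c ∈ {c | quadraticChar F c = α}, (#{b | quadraticChar F (discrim 1 b c) = -1} : ℤ) := by
    rw [natCast_card_filter, Fintype.sum_prod_type_right, sum_filter]
    refine sum_congr rfl fun c _ => ?_
    split_ifs with hc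
    · simp only [hc, and_true, natCast_card_filter, quadraticChar_neg_one_iff_not_isSquare]
    · exact sum_eq_zero fun b _ => if_neg fun h => hc h.2
  calc 4 * (#{p : F × F | ¬IsSquare (discrim 1 p.1 p.2) ∧ quadraticChar F p.2 = α} : ℤ)
      = 2 * ∑ c ∈ {c | quadraticChar F c = α}, (Fintype.card F - α : ℤ) := by
        rw [hfib, mul_sum, mul_sum]
        refine sum_congr rfl fun c hc => ?_
        rw [← two_mul_card_quadraticChar_discrim_eq_neg_one hF hα (mem_filter.1 hc).2]
        ring
    _ = (Fintype.card F - 1) * (Fintype.card F - α) := by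
        rw [sum_const, nsmul_eq_mul, ← mul_assoc, two_mul_card_quadraticChar_eq hF hα]

end QuadraticCharCounts

/-- For `q` an odd prime power and `α ∈ {1, -1}`, the number of monic
irreducible quadratic polynomials `R ∈ F_q[T]` with `χ_q(R(0)) = α` is
`q²/4 - ((1+α)/4)q + α/4`. -/
theorem count_quadratic_primes (F : Type) [Field F] [Fintype F] [DecidableEq F]
    (hq : Odd (Fintype.card F)) (α : ℤ) (hα : α = 1 ∨ α = -1) :
    (({R : F[X] | R.Monic ∧ Irreducible R ∧ R.natDegree = 2 ∧
        quadraticChar F (R.eval 0) = α}.ncard : ℝ))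
      = (1 / 4) * (Fintype.card F : ℝ) ^ 2 - ((1 + (α : ℝ)) / 4) * (Fintype.card F : ℝ)
          + (α : ℝ) / 4 := by
  have hF : ringChar F ≠ 2 := fun h => by
    have := FiniteField.even_card_iff_char_two.1 h
    rw [Nat.odd_iff] at hq
    omega
  have : NeZero (2 : F) := ⟨Ring.two_ne_zero hF⟩
  rw [setOf_monic_irreducible_natDegree_eq_two (quadraticChar F · = α),
    Set.ncard_image_of_injective _ injective_X_sq_add_C_mul_X_add_C, ← coe_filter_univ,
    Set.ncard_coe_finset]
  have hcount : 4 * (#{p : F × F | ¬IsSquare (discrim 1 p.1 p.2) ∧ quadraticChar F p.2 = α} : ℝ)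
      = (Fintype.card F - 1) * (Fintype.card F - α) := by
    exact_mod_cast four_mul_card_not_isSquare_discrim hF hα
  linear_combination hcount / 4
end

section
/- For every integer n ≥ 0, h_n = (1/4^n)·binom(2n, n), where h_n = Σ_{λ ⊢ n} ∏_{j=1}^n 1/(λ_j! · (2j)^{λ_j}), the sum running over all partitions λ of n, with λ_j denoting the number of parts of λ equal to j (and h_0 = 1). -/
open Finset

private def fw (j k : ℕ) : ℚ := 1 / ((k.factorial : ℚ) * (2 * (j : ℚ)) ^ k)

private def gw (n : ℕ) : ℚ :=
  ∑ p : n.Partition, ∏ j ∈ Finset.Icc 1 n, fw j (Multiset.count j p.parts)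

private lemma fw_zero (j : ℕ) : fw j 0 = 1 := by simp [fw]

private lemma fw_succ (j : ℕ) (hj : 1 ≤ j) (k : ℕ) :
    (2 * (j:ℚ)) * (k + 1) * fw j (k+1) = fw j k := by
  have hj0 : (j:ℚ) ≠ 0 := by exact_mod_cast Nat.one_le_iff_ne_zero.mp hj
  have hf : ((k.factorial : ℚ)) ≠ 0 := by exact_mod_cast k.factorial_ne_zero
  rw [fw, fw, Nat.factorial_succ, pow_succ]
  push_cast
  field_simp

private lemma mem_Icc_of_mem_parts {m : ℕ} (p : m.Partition) {j : ℕ}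
    (hj : j ∈ p.parts) : j ∈ Finset.Icc 1 m := by
  rw [Finset.mem_Icc]
  exact ⟨p.parts_pos hj, by
    have := Multiset.single_le_sum (fun x _ => Nat.zero_le x) j hj
    simpa [p.parts_sum] using this⟩

private lemma count_eq_zero_of_notMem_Icc {m : ℕ} (p : m.Partition) {j : ℕ}
    (hj : j ∉ Finset.Icc 1 m) : Multiset.count j p.parts = 0 := by
  rw [Multiset.count_eq_zero]
  exact fun h => hj (mem_Icc_of_mem_parts p h)

private lemma weighted_count_sum {m : ℕ} (p : m.Partition) :
    ∑ j ∈ Finset.Icc 1 m, j * Multiset.count j p.parts = m := by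
  have h := Finset.sum_multiset_map_count p.parts (id : ℕ → ℕ)
  rw [Multiset.map_id, p.parts_sum] at h
  simp only [smul_eq_mul, id] at h
  conv_rhs => rw [h]
  rw [Finset.sum_subset (fun j hj => mem_Icc_of_mem_parts p (Multiset.mem_toFinset.mp hj))]
  · exact Finset.sum_congr rfl (fun j _ => mul_comm _ _)
  · intro j _ hj
    rw [Multiset.count_eq_zero.mpr (fun h' => hj (Multiset.mem_toFinset.mpr h'))]
    simp

private lemma prod_extend {m M : ℕ} (hmM : m ≤ M) (p : m.Partition) :
    ∏ j ∈ Finset.Icc 1 M, fw j (Multiset.count j p.parts)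
      = ∏ j ∈ Finset.Icc 1 m, fw j (Multiset.count j p.parts) := by
  rw [Finset.prod_subset (Finset.Icc_subset_Icc_right hmM)]
  intro j hjM hjm
  rw [count_eq_zero_of_notMem_Icc p hjm, fw_zero]

private def erasePart {m : ℕ} (j : ℕ) (p : m.Partition) (hjp : j ∈ p.parts) :
    (m - j).Partition where
  parts := p.parts.erase j
  parts_pos := fun {i} hi => p.parts_pos (Multiset.mem_of_mem_erase hi)
  parts_sum := by
    have h1 : (j ::ₘ p.parts.erase j).sum = m := by
      rw [Multiset.cons_erase hjp, p.parts_sum]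
    rw [Multiset.sum_cons] at h1
    omega

private def insertPart {m j : ℕ} (hj : 1 ≤ j) (hjm : j ≤ m) (μ : (m - j).Partition) :
    m.Partition where
  parts := j ::ₘ μ.parts
  parts_pos := fun {i} hi => by
    rcases Multiset.mem_cons.mp hi with h | h
    · omega
    · exact μ.parts_pos h
  parts_sum := by rw [Multiset.sum_cons, μ.parts_sum]; omega

private lemma step (m j : ℕ) (hj : 1 ≤ j) (hjm : j ≤ m) :
    ∑ p : m.Partition, (2 * (j:ℚ) * (Multiset.count j p.parts))
        * ∏ i ∈ Finset.Icc 1 m, fw i (Multiset.count i p.parts)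
      = gw (m - j) := by
  classical
  rw [← Finset.sum_filter_add_sum_filter_not Finset.univ (fun p : m.Partition => j ∈ p.parts)]
  have h2 : ∑ p ∈ Finset.univ.filter (fun p : m.Partition => j ∉ p.parts),
      (2 * (j:ℚ) * (Multiset.count j p.parts))
        * ∏ i ∈ Finset.Icc 1 m, fw i (Multiset.count i p.parts) = 0 := by
    apply Finset.sum_eq_zero
    intro p hp
    rw [Finset.mem_filter] at hp
    rw [Multiset.count_eq_zero.mpr hp.2]
    simp
  rw [h2, add_zero, gw]
  refine Finset.sum_bij'
    (fun (p : m.Partition) (hp : p ∈ Finset.univ.filter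
        (fun p : m.Partition => j ∈ p.parts)) => erasePart j p (Finset.mem_filter.mp hp).2)
    (fun (μ : (m - j).Partition) _ => insertPart hj hjm μ) ?_ ?_ ?_ ?_ ?_
  · intro p hp; exact Finset.mem_univ _
  · intro μ hμ
    rw [Finset.mem_filter]
    exact ⟨Finset.mem_univ _, Multiset.mem_cons_self _ _⟩
  · intro p hp
    have hjp : j ∈ p.parts := (Finset.mem_filter.mp hp).2
    apply Nat.Partition.ext
    show j ::ₘ p.parts.erase j = p.parts
    exact Multiset.cons_erase hjp
  · intro μ hμ
    apply Nat.Partition.ext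
    show (j ::ₘ μ.parts).erase j = μ.parts
    exact Multiset.erase_cons_head _ _
  · intro p hp
    simp only [erasePart]
    have hjp : j ∈ p.parts := (Finset.mem_filter.mp hp).2
    set c : ℕ := Multiset.count j (p.parts.erase j) with hc
    have hcpos : 0 < Multiset.count j p.parts := Multiset.count_pos.mpr hjp
    have hcount : Multiset.count j p.parts = c + 1 := by
      rw [hc, Multiset.count_erase_self]
      omega
    have hIcc : j ∈ Finset.Icc 1 m := Finset.mem_Icc.mpr ⟨hj, hjm⟩
    have heparts : (erasePart j p hjp).parts = p.parts.erase j := rfl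
    rw [← Finset.mul_prod_erase _ _ hIcc, hcount]
    have hrest : ∀ i ∈ (Finset.Icc 1 m).erase j,
        fw i (Multiset.count i p.parts) = fw i (Multiset.count i (p.parts.erase j)) := by
      intro i hi
      rw [Multiset.count_erase_of_ne (Finset.ne_of_mem_erase hi)]
    rw [Finset.prod_congr rfl hrest]
    have hext := prod_extend (Nat.sub_le m j) (erasePart j p hjp)
    simp only [erasePart] at hext
    rw [← hext, ← Finset.mul_prod_erase _ _ hIcc]
    have hcj : Multiset.count j (p.parts.erase j) = c := hc.symm
    rw [hcj]
    push_cast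
    rw [← fw_succ j hj c]
    ring

private lemma key (n : ℕ) (_hn : 1 ≤ n) :
    (2 * (n:ℚ)) * gw n = ∑ k ∈ Finset.range n, gw k := by
  rw [gw, Finset.mul_sum]
  have h1 : ∀ p : n.Partition,
      (2 * (n:ℚ)) * ∏ j ∈ Finset.Icc 1 n, fw j (Multiset.count j p.parts)
        = ∑ j ∈ Finset.Icc 1 n, (2 * (j:ℚ) * (Multiset.count j p.parts))
            * ∏ i ∈ Finset.Icc 1 n, fw i (Multiset.count i p.parts) := by
    intro p
    rw [← Finset.sum_mul]
    congr 1
    have h' := congrArg (Nat.cast : ℕ → ℚ) (weighted_count_sum p)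
    push_cast at h'
    rw [← h', Finset.mul_sum]
    exact Finset.sum_congr rfl fun j _ => by ring
  rw [Finset.sum_congr rfl fun p _ => h1 p, Finset.sum_comm]
  rw [Finset.sum_congr rfl fun j hj => step n j (Finset.mem_Icc.mp hj).1 (Finset.mem_Icc.mp hj).2]
  refine Finset.sum_nbij' (fun j => n - j) (fun k => n - k) ?_ ?_ ?_ ?_ ?_
  · intro j hj; rw [Finset.mem_Icc] at hj; rw [Finset.mem_range]; omega
  · intro k hk; rw [Finset.mem_range] at hk; rw [Finset.mem_Icc]; omega
  · intro j hj; rw [Finset.mem_Icc] at hj; omega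
  · intro k hk; rw [Finset.mem_range] at hk; omega
  · intro j hj; rfl

private def aq (n : ℕ) : ℚ := ((2 * n).choose n : ℚ) / 4 ^ n

private lemma aq_rec (n : ℕ) : (2 * (n:ℚ) + 1) * aq n = (2 * (n:ℚ) + 2) * aq (n + 1) := by
  have h := Nat.succ_mul_centralBinom_succ n
  simp only [Nat.centralBinom] at h
  have h' : ((n:ℚ) + 1) * ((2 * (n + 1)).choose (n + 1)) = 2 * (2 * n + 1) * ((2 * n).choose n) := by
    exact_mod_cast h
  rw [aq, aq]
  have h4 : (4 : ℚ) ^ n ≠ 0 := by positivity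
  field_simp [pow_succ]
  linear_combination (-2 * (4:ℚ)^n) * h'

private lemma aq_sum (n : ℕ) :
    ∑ k ∈ Finset.range (n + 1), aq k = (2 * (n:ℚ) + 1) * aq n := by
  induction n with
  | zero => simp [aq]
  | succ n ih =>
    rw [Finset.sum_range_succ, ih, aq_rec n]
    push_cast
    ring

private lemma gw_eq (n : ℕ) : gw n = aq n := by
  induction n using Nat.strong_induction_on with
  | _ n ih =>
    match n, ih with
    | 0, _ => simp [gw, aq]
    | (m + 1), ih =>
      have hk := key (m + 1) (by omega)
      have hsum : ∑ k ∈ Finset.range (m + 1), gw k = ∑ k ∈ Finset.range (m + 1), aq k :=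
        Finset.sum_congr rfl fun k hk => ih k (Finset.mem_range.mp hk)
      rw [hsum, aq_sum m, aq_rec m] at hk
      have h2 : (2 * ((m:ℚ) + 1)) ≠ 0 := by positivity
      have : (2 * ((m + 1 : ℕ) : ℚ)) * gw (m + 1) = (2 * ((m:ℚ) + 1)) * aq (m + 1) := by
        rw [hk]; ring
      push_cast at this
      exact mul_left_cancel₀ h2 this

/-- Ewens-type identity: for every `n ≥ 0`,
`h_n := Σ_{λ ⊢ n} ∏_{j=1}^n 1/(λ_j! (2j)^{λ_j}) = (1/4^n) C(2n, n)`,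
where `λ_j` is the number of parts of `λ` equal to `j`. -/
theorem hn_eq_central_binomial (n : ℕ) :
    (∑ p : n.Partition, ∏ j ∈ Finset.Icc 1 n,
        (1 : ℚ) / ((Multiset.count j p.parts).factorial *
          (2 * j) ^ (Multiset.count j p.parts)))
      = (1 / 4 ^ n) * ((2 * n).choose n) := by
  have h : (∑ p : n.Partition, ∏ j ∈ Finset.Icc 1 n,
      (1 : ℚ) / ((Multiset.count j p.parts).factorial *
        (2 * j) ^ (Multiset.count j p.parts))) = gw n := by
    simp only [gw, fw]
  rw [h, gw_eq, aq]
  ring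
end
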